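/- Let (f,β) be a Moufang pair on an abelian group (X,+). Then (f³, β) is a construction pair on (X,+); that is, β is symmetric, alternating and biadditive, and with g = f³ one has g⁻¹(g(x)+g(y)) = x+y+β(x,y)+g⁻¹(β(x,y))+g⁻²(β(x,y)) for all x,y ∈ X, β(β(x,y),z) = 0 for all x,y,z ∈ X, and g⁻¹(β(x,y)) = β(g(x),y) for all x,y ∈ X. -/

import Mathlib

/-- A construction pair `(g, γ)` on an abelian group `(X, +)`. -/
structure IsConstructionPair {X : Type*} [AddCommGroup X]
    (g : Equiv.Perm X) (γ : X → X → X) : Prop where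
  symm : ∀ x y, γ x y = γ y x
  alt : ∀ x, γ x x = 0
  add_left : ∀ x y z, γ (x + y) z = γ x z + γ y z
  add_right : ∀ x y z, γ x (y + z) = γ x y + γ x z
  c1 : ∀ x y, g⁻¹ (g x + g y)
      = x + y + γ x y + g⁻¹ (γ x y) + g⁻¹ (g⁻¹ (γ x y))
  c2 : ∀ x y z, γ (γ x y) z = 0
  c3 : ∀ x y, g⁻¹ (γ x y) = γ (g x) y

/-!
With `g = f³`, axiom (P3) says `f (β (g x) y) = β (f x) (f y)`; pushing `f⁻¹` through twice more
and using the symmetry of `β` gives `g⁻¹ (β x y) = β (g x) y`, which is (C3). For (C1), apply `f`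
three times to `x + y + β x y + β (g x) y + β (g (g x)) y`: each application of `f` turns the
leading `x + y + β x y` into `f x + f y` by the definition of `β`, passes through the `β`-terms
additively because `β` vanishes on them (P2), and by (P3) turns the first of the remaining
`β`-terms into `β (f x) (f y)`, so after three steps only `g x + g y` is left.
-/

namespace Equiv.Perm

theorem apply_inv_self {α : Type*} (f : Perm α) (x : α) : f (f⁻¹ x) = x :=
  f.apply_symm_apply x

theorem inv_apply_self {α : Type*} (f : Perm α) (x : α) : f⁻¹ (f x) = x :=
  f.symm_apply_apply x

variable {X : Type*} {f : Perm X} {β : X → X → X}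

theorem apply_moufang (hP3 : ∀ x y, β (f x) (f y) = f (β (f (f (f x))) y)) (u v : X) :
    f (β u v) = β (f⁻¹ (f⁻¹ u)) (f v) := by
  simpa using (hP3 (f⁻¹ (f⁻¹ (f⁻¹ u))) v).symm

variable [AddCommGroup X]

theorem moufang_comm (hβ : ∀ x y, β x y = f⁻¹ (f x + f y) - x - y) (x y : X) :
    β x y = β y x := by
  rw [hβ, hβ, add_comm (f x)]
  abel

theorem apply_add_add_moufang (hβ : ∀ x y, β x y = f⁻¹ (f x + f y) - x - y) (x y : X) :
    f (x + y + β x y) = f x + f y := by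
  have h : x + y + β x y = f⁻¹ (f x + f y) := by rw [hβ]; abel
  rw [h, apply_inv_self]

theorem apply_add_moufang (hβ : ∀ x y, β x y = f⁻¹ (f x + f y) - x - y)
    (hP2 : ∀ x y z, β (β x y) z = 0) (x u v : X) :
    f (x + β u v) = f x + f (β u v) := by
  have h := apply_add_add_moufang hβ x (β u v)
  rwa [moufang_comm hβ x, hP2, add_zero] at h

theorem moufang_cube_left (hβ : ∀ x y, β x y = f⁻¹ (f x + f y) - x - y)
    (hP3 : ∀ x y, β (f x) (f y) = f (β (f (f (f x))) y)) (x y : X) :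
    β (f (f (f x))) y = β x (f (f (f y))) := by
  apply f.injective
  rw [← hP3, moufang_comm hβ x, ← hP3, moufang_comm hβ (f x)]

theorem cube_moufang_cube_left (hβ : ∀ x y, β x y = f⁻¹ (f x + f y) - x - y)
    (hP3 : ∀ x y, β (f x) (f y) = f (β (f (f (f x))) y)) (x y : X) :
    f (f (f (β (f (f (f x))) y))) = β x y := by
  have h := moufang_cube_left hβ hP3 (f⁻¹ (f⁻¹ (f⁻¹ x))) y
  simp only [apply_inv_self] at h
  rw [← hP3, apply_moufang hP3, inv_apply_self, apply_moufang hP3, h]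

theorem cube_add_add_moufang (hβ : ∀ x y, β x y = f⁻¹ (f x + f y) - x - y)
    (hP2 : ∀ x y z, β (β x y) z = 0) (hP3 : ∀ x y, β (f x) (f y) = f (β (f (f (f x))) y))
    (x y : X) :
    f (f (f (x + y + β x y + β (f (f (f x))) y + β (f (f (f (f (f (f x)))))) y)))
      = f (f (f x)) + f (f (f y)) := by
  have h₁ : f (x + y + β x y + β (f (f (f x))) y + β (f (f (f (f (f (f x)))))) y)
      = f x + f y + β (f x) (f y) + β (f (f (f (f x)))) (f y) := by
    rw [apply_add_moufang hβ hP2, apply_add_moufang hβ hP2, apply_add_add_moufang hβ, ← hP3,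
      apply_moufang hP3, inv_apply_self, inv_apply_self]
  have h₂ : f (f x + f y + β (f x) (f y) + β (f (f (f (f x)))) (f y))
      = f (f x) + f (f y) + β (f (f x)) (f (f y)) := by
    rw [apply_add_moufang hβ hP2, apply_add_add_moufang hβ, ← hP3]
  rw [h₁, h₂, apply_add_add_moufang hβ]

end Equiv.Perm

open Equiv.Perm in
theorem stmt_19 {X : Type*} [AddCommGroup X] (f : Equiv.Perm X) (β : X → X → X)
    (hβ : ∀ x y : X, β x y = f⁻¹ (f x + f y) - x - y)
    (halt : ∀ x : X, β x x = 0)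
    (haddl : ∀ x y z : X, β (x + y) z = β x z + β y z)
    (haddr : ∀ x y z : X, β x (y + z) = β x y + β x z)
    (hP2 : ∀ x y z : X, β (β x y) z = 0)
    (hP3 : ∀ x y : X, β (f x) (f y) = f (β (f (f (f x))) y)) :
    IsConstructionPair (f ^ 3) β := by
  have hcube : ∀ z, (f ^ 3) z = f (f (f z)) := fun _ => rfl
  have hc3 : ∀ x y, (f ^ 3)⁻¹ (β x y) = β ((f ^ 3) x) y := fun x y => by
    rw [inv_eq_iff_eq, hcube, hcube, cube_moufang_cube_left hβ hP3]
  refine ⟨moufang_comm hβ, halt, haddl, haddr, fun x y => ?_, hP2, hc3⟩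
  rw [hc3, hc3, inv_eq_iff_eq]
  simp only [hcube]
  exact (cube_add_add_moufang hβ hP2 hP3 x y).symm
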